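/- Grade S by assigning the variables the (cohomological) degrees deg(a) = 2, deg(b) = 3, deg(c) = 2, deg(d) = 3, and for each integer e ≥ 0 let N_e denote the image under π of the submodule of weighted-homogeneous polynomials of weighted degree e. Then each N_e is a finite-dimensional ℤ/2-vector space, and the Poincaré series of N satisfies (∑_{e≥0} dim_{ℤ/2}(N_e) · t^e) · (1 − t²)² · (1 − t³)² = (1 − t⁵)·(1 − t⁹) as an identity of formal power series over ℤ. -/

import Mathlib

open MvPolynomial

/-- `S = ℤ/2[a,b,c,d] ≅ H^*(BSO(3)²; ℤ/2)` with `a = w₂'`, `b = w₃'`, `c = w₂''`, `d = w₃''`. -/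
noncomputable abbrev S : Type := MvPolynomial (Fin 4) (ZMod 2)

noncomputable def a : S := X 0
noncomputable def b : S := X 1
noncomputable def c : S := X 2
noncomputable def d : S := X 3

/-- The ideal `J = (a·d + c·b, b·d² + b²·d)` of relations. -/
noncomputable def J : Ideal S := Ideal.span {a * d + c * b, b * d ^ 2 + b ^ 2 * d}

/-- `N = S ⧸ J`, the bottom line of the `E_∞`-term. -/
noncomputable abbrev N : Type := S ⧸ J

/-- The quotient map `π : S → N`. -/
noncomputable def π : S →+* N := Ideal.Quotient.mk J

/-- Cohomological degrees `deg(a) = 2`, `deg(b) = 3`, `deg(c) = 2`, `deg(d) = 3`. -/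
def cdeg : Fin 4 → ℕ := ![2, 3, 2, 3]

/-- `N_e`: the image under `π` of the weighted-homogeneous polynomials of degree `e`. -/
noncomputable def Ndeg (e : ℕ) : Submodule (ZMod 2) N :=
  Submodule.map (Ideal.Quotient.mkₐ (ZMod 2) J).toLinearMap
    (weightedHomogeneousSubmodule (ZMod 2) cdeg e)

/-!
`r₂ = b·d·(b + d)` is a product of primes none of which divides `r₁`, so `r₁` and `r₂` are coprime.
For coprime homogeneous `f, g` of degrees `p, q` in a graded domain `S`, the degree-`n` part of
`(f, g)` is `f·S_{n-p} + g·S_{n-q}`, and the intersection of the two summands is `fg·S_{n-p-q}`;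
by inclusion–exclusion the Poincaré series of `S ⧸ (f, g)` is that of `S` times
`(1 - t^p)(1 - t^q)`. Counting monomials, the Poincaré series of a weighted polynomial ring is
`∏ᵢ 1 / (1 - t^{wᵢ})`.
-/

open Module

lemma Submodule.finrank_map_add_finrank_ker_inf {K V V₂ : Type*} [DivisionRing K]
    [AddCommGroup V] [Module K V] [AddCommGroup V₂] [Module K V₂] (f : V →ₗ[K] V₂)
    (W : Submodule K V) [FiniteDimensional K W] :
    finrank K (W.map f) + finrank K (LinearMap.ker f ⊓ W : Submodule K V) = finrank K W := by
  have := (f.domRestrict W).finrank_range_add_finrank_ker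
  rw [LinearMap.range_domRestrict, LinearMap.ker_domRestrict] at this
  rwa [← (Submodule.comapSubtypeEquivOfLe inf_le_right).finrank_eq, Submodule.comap_inf,
    Submodule.comap_subtype_self, inf_top_eq]

lemma Ideal.span_singleton_inf_span_singleton_of_isRelPrime {R : Type*} [CommRing R]
    [DecompositionMonoid R] {f g : R} (h : IsRelPrime f g) :
    Ideal.span {f} ⊓ Ideal.span {g} = Ideal.span {f * g} := by
  refine le_antisymm ?_ (le_inf ?_ ?_)
  · rintro x ⟨hf, hg⟩
    rw [SetLike.mem_coe, Ideal.mem_span_singleton] at hf hg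
    exact Ideal.mem_span_singleton.mpr (h.mul_dvd hf hg)
  · exact Ideal.span_singleton_le_span_singleton.mpr (dvd_mul_right f g)
  · exact Ideal.span_singleton_le_span_singleton.mpr (dvd_mul_left g f)

noncomputable def poincareSeries {K M : Type*} [Field K] [AddCommGroup M] [Module K M]
    (V : ℕ → Submodule K M) : PowerSeries ℤ :=
  PowerSeries.mk fun n => (finrank K (V n) : ℤ)

namespace GradedAlgebra

open PowerSeries

variable {K A : Type*} [Field K] [CommRing A] [Algebra K A] (𝒜 : ℕ → Submodule K A)

def degreePart (I : Ideal A) (n : ℕ) : Submodule K A := I.restrictScalars K ⊓ 𝒜 n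

variable {𝒜}

lemma degreePart_inf (I I' : Ideal A) (n : ℕ) :
    degreePart 𝒜 (I ⊓ I') n = degreePart 𝒜 I n ⊓ degreePart 𝒜 I' n := by
  rw [degreePart, degreePart, degreePart, Submodule.restrictScalars_inf, inf_inf_distrib_right]

lemma finrank_map_mkₐ_add_finrank_degreePart (I : Ideal A) (n : ℕ)
    [FiniteDimensional K (𝒜 n)] :
    finrank K ((𝒜 n).map (Ideal.Quotient.mkₐ K I).toLinearMap) + finrank K (degreePart 𝒜 I n) =
      finrank K (𝒜 n) := by
  have hker : LinearMap.ker (Ideal.Quotient.mkₐ K I).toLinearMap = I.restrictScalars K := by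
    ext x
    simp [Ideal.Quotient.eq_zero_iff_mem]
  rw [degreePart, ← hker]
  exact Submodule.finrank_map_add_finrank_ker_inf _ _

instance [∀ n, FiniteDimensional K (𝒜 n)] (I : Ideal A) (n : ℕ) :
    FiniteDimensional K (degreePart 𝒜 I n) :=
  Submodule.finiteDimensional_of_le inf_le_right

variable [GradedAlgebra 𝒜]

lemma degreePart_span_singleton_of_le {f : A} {p n : ℕ} (hf : f ∈ 𝒜 p) (hpn : p ≤ n) :
    degreePart 𝒜 (Ideal.span {f}) n = (𝒜 (n - p)).map (LinearMap.mulLeft K f) := by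
  apply le_antisymm
  · rintro x ⟨hxf, hxn⟩
    obtain ⟨u, rfl⟩ := Ideal.mem_span_singleton.mp hxf
    refine ⟨DirectSum.decompose 𝒜 u (n - p), SetLike.coe_mem _, ?_⟩
    rw [LinearMap.mulLeft_apply, ← DirectSum.coe_decompose_mul_of_left_mem_of_le 𝒜 hf hpn,
      DirectSum.decompose_of_mem_same 𝒜 hxn]
  · rintro _ ⟨u, hu, rfl⟩
    refine ⟨Ideal.mul_mem_right u _ (Ideal.mem_span_singleton_self f), ?_⟩
    simpa [Nat.add_sub_cancel' hpn] using SetLike.mul_mem_graded hf hu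

lemma degreePart_span_singleton_of_lt {f : A} {p n : ℕ} (hf : f ∈ 𝒜 p) (hnp : n < p) :
    degreePart 𝒜 (Ideal.span {f}) n = ⊥ := by
  refine (Submodule.eq_bot_iff _).mpr ?_
  rintro x ⟨hxf, hxn⟩
  obtain ⟨u, rfl⟩ := Ideal.mem_span_singleton.mp hxf
  rw [← DirectSum.decompose_of_mem_same 𝒜 hxn,
    DirectSum.coe_decompose_mul_of_left_mem_of_not_le 𝒜 hf hnp.not_ge]

lemma poincareSeries_degreePart_span_singleton [IsDomain A] {f : A} {p : ℕ} (hf : f ∈ 𝒜 p)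
    (hf0 : f ≠ 0) :
    poincareSeries (degreePart 𝒜 (Ideal.span {f})) = PowerSeries.X ^ p * poincareSeries 𝒜 := by
  ext n
  rw [coeff_X_pow_mul']
  simp only [poincareSeries, coeff_mk]
  split_ifs with hpn
  · rw [degreePart_span_singleton_of_le hf hpn, LinearEquiv.finrank_eq
      (Submodule.equivMapOfInjective _ (mul_right_injective₀ hf0) _).symm]
  · rw [degreePart_span_singleton_of_lt hf (not_le.mp hpn), finrank_bot, Nat.cast_zero]

lemma degreePart_sup {I I' : Ideal A} (hI : I.IsHomogeneous 𝒜) (hI' : I'.IsHomogeneous 𝒜)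
    (n : ℕ) : degreePart 𝒜 (I ⊔ I') n = degreePart 𝒜 I n ⊔ degreePart 𝒜 I' n := by
  refine le_antisymm ?_ (sup_le (inf_le_inf_right _ (by simp)) (inf_le_inf_right _ (by simp)))
  rintro x ⟨hx, hxn⟩
  obtain ⟨y, hy, z, hz, rfl⟩ := Submodule.mem_sup.mp hx
  rw [← DirectSum.decompose_of_mem_same 𝒜 hxn, DirectSum.decompose_add, DirectSum.add_apply,
    Submodule.coe_add]
  exact Submodule.add_mem_sup ⟨hI n hy, SetLike.coe_mem _⟩ ⟨hI' n hz, SetLike.coe_mem _⟩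

lemma isHomogeneous_span_singleton {f : A} {p : ℕ} (hf : f ∈ 𝒜 p) :
    (Ideal.span {f}).IsHomogeneous 𝒜 :=
  Ideal.homogeneous_span 𝒜 _ fun _ hx => ⟨p, Set.mem_singleton_iff.mp hx ▸ hf⟩

variable [∀ n, FiniteDimensional K (𝒜 n)] [IsDomain A] [DecompositionMonoid A]

lemma poincareSeries_degreePart_span_pair {f g : A} {p q : ℕ} (hf : f ∈ 𝒜 p) (hg : g ∈ 𝒜 q)
    (hf0 : f ≠ 0) (hg0 : g ≠ 0) (hfg : IsRelPrime f g) :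
    poincareSeries (degreePart 𝒜 (Ideal.span {f, g})) =
      (PowerSeries.X ^ p + PowerSeries.X ^ q - PowerSeries.X ^ (p + q)) * poincareSeries 𝒜 := by
  have key : poincareSeries (degreePart 𝒜 (Ideal.span {f, g})) +
      poincareSeries (degreePart 𝒜 (Ideal.span {f * g})) =
      poincareSeries (degreePart 𝒜 (Ideal.span {f})) +
        poincareSeries (degreePart 𝒜 (Ideal.span {g})) := by
    ext n
    simp only [poincareSeries, map_add, coeff_mk]
    have := Submodule.finrank_sup_add_finrank_inf_eq (degreePart 𝒜 (Ideal.span {f}) n)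
      (degreePart 𝒜 (Ideal.span {g}) n)
    rw [← degreePart_sup (isHomogeneous_span_singleton hf) (isHomogeneous_span_singleton hg),
      ← degreePart_inf, ← Ideal.span_insert,
      Ideal.span_singleton_inf_span_singleton_of_isRelPrime hfg] at this
    exact_mod_cast this
  rw [poincareSeries_degreePart_span_singleton hf hf0,
    poincareSeries_degreePart_span_singleton hg hg0,
    poincareSeries_degreePart_span_singleton (SetLike.mul_mem_graded hf hg)
      (mul_ne_zero hf0 hg0)] at key
  linear_combination key

theorem poincareSeries_quotient_span_pair {f g : A} {p q : ℕ} (hf : f ∈ 𝒜 p) (hg : g ∈ 𝒜 q)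
    (hf0 : f ≠ 0) (hg0 : g ≠ 0) (hfg : IsRelPrime f g) :
    poincareSeries (fun n => (𝒜 n).map (Ideal.Quotient.mkₐ K (Ideal.span {f, g})).toLinearMap) =
      poincareSeries 𝒜 * (1 - PowerSeries.X ^ p) * (1 - PowerSeries.X ^ q) := by
  have key : poincareSeries
        (fun n => (𝒜 n).map (Ideal.Quotient.mkₐ K (Ideal.span {f, g})).toLinearMap) +
      poincareSeries (degreePart 𝒜 (Ideal.span {f, g})) = poincareSeries 𝒜 := by
    ext n
    simp only [poincareSeries, map_add, coeff_mk]
    exact_mod_cast finrank_map_mkₐ_add_finrank_degreePart _ n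
  rw [poincareSeries_degreePart_span_pair hf hg hf0 hg0 hfg] at key
  linear_combination key

end GradedAlgebra

noncomputable def Finsupp.weightEqEquiv {σ : Type*} [Fintype σ] [DecidableEq σ] {w : σ → ℕ}
    (hw : ∀ i, w i ≠ 0) (n : ℕ) :
    {d : σ →₀ ℕ // Finsupp.weight w d = n} ≃
      ((Finset.univ.finsuppAntidiag n).filter fun l => ∀ i, w i ∣ l i) where
  toFun := fun ⟨d, hd⟩ => ⟨Finsupp.equivFunOnFinite.symm fun i => w i * d i, by
    refine Finset.mem_filter.mpr ⟨Finset.mem_finsuppAntidiag.mpr ⟨?_, by simp⟩, fun i => by simp⟩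
    rw [← hd, Finsupp.weight_eq_sum]
    simp [mul_comm]⟩
  invFun := fun ⟨l, hl⟩ => ⟨Finsupp.equivFunOnFinite.symm fun i => l i / w i, by
    obtain ⟨hl, hdvd⟩ := Finset.mem_filter.mp hl
    rw [Finsupp.weight_eq_sum, ← (Finset.mem_finsuppAntidiag.mp hl).1]
    refine Finset.sum_congr rfl fun i _ => ?_
    simp [Nat.div_mul_cancel (hdvd i)]⟩
  left_inv := fun ⟨d, hd⟩ => by
    ext i
    simp [Nat.mul_div_cancel_left _ (Nat.pos_of_ne_zero (hw i))]
  right_inv := fun ⟨l, hl⟩ => by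
    ext i
    simp [Nat.mul_div_cancel' ((Finset.mem_filter.mp hl).2 i)]

namespace PowerSeries

lemma expand_mk_one_mul_one_sub_X_pow {m : ℕ} (hm : m ≠ 0) :
    expand m hm (mk 1 : PowerSeries ℤ) * (1 - X ^ m) = 1 := by
  simpa using congrArg (expand m hm) (mk_one_mul_one_sub_eq_one ℤ)

lemma coeff_prod_expand_mk_one {σ : Type*} [Fintype σ] {w : σ → ℕ} (hw : ∀ i, w i ≠ 0)
    (n : ℕ) :
    coeff n (∏ i, expand (w i) (hw i) (mk 1 : PowerSeries ℤ)) =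
      Nat.card {d : σ →₀ ℕ // Finsupp.weight w d = n} := by
  classical
  rw [coeff_prod, Nat.card_congr (Finsupp.weightEqEquiv hw n), Nat.card_eq_finsetCard]
  simp only [coeff_expand, coeff_mk, Pi.one_apply, Finset.prod_boole, Finset.mem_univ,
    true_implies, Finset.sum_boole]

end PowerSeries

namespace MvPolynomial

lemma prime_X_add_X {σ R : Type*} [CommRing R] [IsDomain R] {i j : σ} (hij : i ≠ j) :
    Prime (X i + X j : MvPolynomial σ R) := by
  classical
  let φ : MvPolynomial σ R →ₐ[R] MvPolynomial σ R := aeval (Function.update X i (X i + X j))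
  let ψ : MvPolynomial σ R →ₐ[R] MvPolynomial σ R := aeval (Function.update X i (X i - X j))
  have hφψ : φ.comp ψ = AlgHom.id R _ := by
    ext k
    by_cases hk : k = i
    · subst hk; simp [φ, ψ, Function.update_of_ne hij.symm]
    · simp [φ, ψ, Function.update_of_ne hk]
  have hψφ : ψ.comp φ = AlgHom.id R _ := by
    ext k
    by_cases hk : k = i
    · subst hk; simp [φ, ψ, Function.update_of_ne hij.symm]
    · simp [φ, ψ, Function.update_of_ne hk]
  have : AlgEquiv.ofAlgHom φ ψ hφψ hψφ (X i) = X i + X j := by simp [φ]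
  exact this ▸ (MulEquiv.prime_iff (AlgEquiv.ofAlgHom φ ψ hφψ hψφ).toMulEquiv).mpr X_prime

variable (K : Type*) [Field K] {σ : Type*} (w : σ → ℕ)

lemma finrank_weightedHomogeneousSubmodule (n : ℕ) :
    finrank K (weightedHomogeneousSubmodule K w n) =
      Nat.card {d : σ →₀ ℕ // Finsupp.weight w d = n} := by
  rw [weightedHomogeneousSubmodule_eq_finsupp_supported]
  exact finrank_eq_nat_card_basis (basisRestrictSupport K _)

variable [Fintype σ] {w}

lemma finiteDimensional_weightedHomogeneousSubmodule (hw : ∀ i, w i ≠ 0) (n : ℕ) :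
    FiniteDimensional K (weightedHomogeneousSubmodule K w n) :=
  Module.Finite.iff_fg.mpr (weightedHomogeneousSubmodule_fg (R := K) w hw n)

lemma poincareSeries_weightedHomogeneousSubmodule_mul_prod (hw : ∀ i, w i ≠ 0) :
    poincareSeries (weightedHomogeneousSubmodule K w) * ∏ i, (1 - PowerSeries.X ^ w i) = 1 := by
  have hprod : poincareSeries (weightedHomogeneousSubmodule K w) =
      ∏ i, PowerSeries.expand (w i) (hw i) (PowerSeries.mk 1) := by
    ext n
    rw [PowerSeries.coeff_prod_expand_mk_one, poincareSeries, PowerSeries.coeff_mk,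
      finrank_weightedHomogeneousSubmodule]
  rw [hprod, ← Finset.prod_mul_distrib]
  exact Finset.prod_eq_one fun i _ => PowerSeries.expand_mk_one_mul_one_sub_X_pow (hw i)

end MvPolynomial

noncomputable def r₁ : S := a * d + c * b
noncomputable def r₂ : S := b * d ^ 2 + b ^ 2 * d

lemma r₂_eq : r₂ = b * d * (b + d) := by
  rw [r₂]
  ring

lemma r₁_mem : r₁ ∈ weightedHomogeneousSubmodule (ZMod 2) cdeg 5 :=
  ((isWeightedHomogeneous_X _ cdeg 0).mul (isWeightedHomogeneous_X _ cdeg 3)).add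
    ((isWeightedHomogeneous_X _ cdeg 2).mul (isWeightedHomogeneous_X _ cdeg 1))

lemma r₂_mem : r₂ ∈ weightedHomogeneousSubmodule (ZMod 2) cdeg 9 :=
  r₂_eq ▸ ((isWeightedHomogeneous_X _ cdeg 1).mul (isWeightedHomogeneous_X _ cdeg 3)).mul
    ((isWeightedHomogeneous_X _ cdeg 1).add (isWeightedHomogeneous_X _ cdeg 3))

lemma prime_b : Prime b := X_prime
lemma prime_d : Prime d := X_prime
lemma prime_b_add_d : Prime (b + d) := prime_X_add_X (by decide)

lemma eval_r₁ (x : Fin 4 → ZMod 2) : eval x r₁ = x 0 * x 3 + x 2 * x 1 := by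
  simp [r₁, a, b, c, d]

lemma r₁_ne_zero : r₁ ≠ 0 := fun h => by
  simpa [h] using eval_r₁ ![1, 0, 0, 1]

lemma r₂_ne_zero : r₂ ≠ 0 := by
  rw [r₂_eq]
  exact mul_ne_zero (mul_ne_zero prime_b.ne_zero prime_d.ne_zero) prime_b_add_d.ne_zero

/-- Each factor of `r₂` vanishes at a point of `(ℤ/2)⁴` where `r₁` does not. -/
lemma isRelPrime_r₁_r₂ : IsRelPrime r₁ r₂ := by
  have key : ∀ {p : S} (x : Fin 4 → ZMod 2), Prime p → eval x p = 0 → eval x r₁ ≠ 0 →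
      IsRelPrime r₁ p := fun x hp hpx hrx =>
    (hp.irreducible.isRelPrime_iff_not_dvd.mpr fun h => hrx (by
      simpa [hpx] using map_dvd (eval x) h)).symm
  rw [r₂_eq]
  refine IsRelPrime.mul_right (IsRelPrime.mul_right ?_ ?_) ?_
  · exact key ![1, 0, 0, 1] prime_b (by simp [b]) (by rw [eval_r₁]; decide)
  · exact key ![0, 1, 1, 0] prime_d (by simp [d]) (by rw [eval_r₁]; decide)
  · exact key ![1, 1, 0, 1] prime_b_add_d (by simp [b, d]; decide) (by rw [eval_r₁]; decide)

attribute [local instance] weightedGradedAlgebra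

open PowerSeries in
theorem stmt_17 :
    (∀ e : ℕ, Module.Finite (ZMod 2) (Ndeg e)) ∧
    (PowerSeries.mk fun e => (Module.finrank (ZMod 2) (Ndeg e) : ℤ)) *
        (1 - (X : ℤ⟦X⟧) ^ 2) ^ 2 * (1 - (X : ℤ⟦X⟧) ^ 3) ^ 2 =
      (1 - (X : ℤ⟦X⟧) ^ 5) * (1 - (X : ℤ⟦X⟧) ^ 9) := by
  have hw : ∀ i, cdeg i ≠ 0 := by decide
  have hfin := finiteDimensional_weightedHomogeneousSubmodule (ZMod 2) hw
  have hN : poincareSeries Ndeg = poincareSeries (weightedHomogeneousSubmodule (ZMod 2) cdeg) *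
      (1 - PowerSeries.X ^ 5) * (1 - PowerSeries.X ^ 9) :=
    GradedAlgebra.poincareSeries_quotient_span_pair r₁_mem r₂_mem r₁_ne_zero r₂_ne_zero
      isRelPrime_r₁_r₂
  have hS := poincareSeries_weightedHomogeneousSubmodule_mul_prod (ZMod 2) hw
  rw [show ∏ i, (1 - (X : ℤ⟦X⟧) ^ cdeg i) =
      (1 - (X : ℤ⟦X⟧) ^ 2) ^ 2 * (1 - (X : ℤ⟦X⟧) ^ 3) ^ 2 by
    simp only [cdeg, Fin.prod_univ_four, Fin.isValue, Matrix.cons_val_zero, Matrix.cons_val_one,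
      Matrix.cons_val]
    ring] at hS
  refine ⟨fun e => Module.Finite.map _ _, ?_⟩
  rw [show (PowerSeries.mk fun e => (finrank (ZMod 2) (Ndeg e) : ℤ)) = poincareSeries Ndeg from rfl,
    hN]
  linear_combination (1 - (X : ℤ⟦X⟧) ^ 5) * (1 - (X : ℤ⟦X⟧) ^ 9) * hS
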